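/- If α has all partial quotients eventually equal to 2, then q_n/q_{n+1} → √2 − 1 and ‖q_{n+1}α‖/‖q_n α‖ → √2 − 1 as n → ∞. -/

import Mathlib

open Filter Topology

/-- The denominator `q n` of the `n`-th convergent of the continued fraction of `α`. -/
noncomputable def qd (α : ℝ) (n : ℕ) : ℝ := (GenContFract.of α).dens n

/-- The distance from `x` to the nearest integer. -/
noncomputable def nint (x : ℝ) : ℝ := |x - round x|

/-!
Once the partial quotients equal 2, the denominators obey `q (n + 2) = 2 q (n + 1) + q n`, so
`r n = q n / q (n + 1)` satisfies `r (n + 1) = 1 / (2 + r n)`. On `[0, ∞)` this map is a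
`1/4`-contraction with fixed point `√2 - 1`, hence `r n → √2 - 1`.

The fractional parts `u n ∈ [0, 1)` produced by the continued fraction algorithm satisfy the same
recursion backwards, `u n = 1 / (2 + u (n + 1))`; a bounded sequence that contracts towards a
point when read backwards must already sit at it, so `u n = √2 - 1` from some point on. The exact
error formula `‖q (n + 1) α‖ = 1 / (q (n + 1) / u (n + 1) + q n)` then makes the ratio
`‖q (n + 2) α‖ / ‖q (n + 1) α‖` eventually equal to `√2 - 1`, because `(√2 - 1)⁻¹ = 2 + (√2 - 1)`.
-/

open GenContFract
open GenContFract (of)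

section Contraction

variable {X : Type*} {u : ℕ → X} {a : X} {c : ℝ} {N : ℕ}

theorem tendsto_of_dist_succ_le_mul [PseudoMetricSpace X] (hc₀ : 0 ≤ c) (hc : c < 1)
    (h : ∀ n ≥ N, dist (u (n + 1)) a ≤ c * dist (u n) a) : Tendsto u atTop (𝓝 a) := by
  have hdecay : ∀ k, dist (u (k + N)) a ≤ dist (u N) a * c ^ k := by
    intro k
    induction k with
    | zero => simp
    | succ k ih =>
      calc dist (u (k + 1 + N)) a = dist (u (k + N + 1)) a := by rw [Nat.add_right_comm]
        _ ≤ c * dist (u (k + N)) a := h _ (Nat.le_add_left N k)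
        _ ≤ c * (dist (u N) a * c ^ k) := by gcongr
        _ = dist (u N) a * c ^ (k + 1) := by ring
  rw [← tendsto_add_atTop_iff_nat N, tendsto_iff_dist_tendsto_zero]
  refine squeeze_zero (fun _ ↦ dist_nonneg) hdecay ?_
  simpa using (tendsto_pow_atTop_nhds_zero_of_lt_one hc₀ hc).const_mul (dist (u N) a)

theorem eq_of_dist_le_mul_dist_succ [MetricSpace X] {B : ℝ} (hc₀ : 0 ≤ c) (hc : c < 1)
    (hB : ∀ n, dist (u n) a ≤ B) (h : ∀ n ≥ N, dist (u n) a ≤ c * dist (u (n + 1)) a) :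
    ∀ n ≥ N, u n = a := by
  have hdecay : ∀ k, ∀ n ≥ N, dist (u n) a ≤ B * c ^ k := by
    intro k
    induction k with
    | zero => simpa using fun n _ ↦ hB n
    | succ k ih =>
      intro n hn
      calc dist (u n) a ≤ c * dist (u (n + 1)) a := h n hn
        _ ≤ c * (B * c ^ k) := by gcongr; exact ih _ (Nat.le_succ_of_le hn)
        _ = B * c ^ (k + 1) := by ring
  intro n hn
  have hlim : Tendsto (fun k ↦ B * c ^ k) atTop (𝓝 0) := by
    simpa using (tendsto_pow_atTop_nhds_zero_of_lt_one hc₀ hc).const_mul B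
  exact dist_le_zero.mp (ge_of_tendsto' hlim fun k ↦ hdecay k n hn)

end Contraction

theorem dist_inv_two_add_le {x y : ℝ} (hx : 0 ≤ x) (hy : 0 ≤ y) :
    dist (2 + x)⁻¹ (2 + y)⁻¹ ≤ 4⁻¹ * dist x y := by
  have hxy : (2 + x)⁻¹ - (2 + y)⁻¹ = (y - x) / ((2 + x) * (2 + y)) := by
    field_simp
    ring
  rw [Real.dist_eq, Real.dist_eq, hxy, abs_div, abs_sub_comm,
    abs_of_pos (by positivity : 0 < (2 + x) * (2 + y)), div_eq_inv_mul]
  gcongr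
  nlinarith

theorem sqrt_two_sub_one_eq_inv : √2 - 1 = (2 + (√2 - 1))⁻¹ := by
  have hs : √2 * √2 = 2 := Real.mul_self_sqrt zero_le_two
  exact eq_inv_of_mul_eq_one_left (by linear_combination hs)

theorem sqrt_two_sub_one_mem_Ico : √2 - 1 ∈ Set.Ico (0 : ℝ) 1 := by
  constructor <;> nlinarith [Real.sq_sqrt zero_le_two, Real.sqrt_nonneg 2]

namespace GenContFract

variable {K : Type*} [Field K] [LinearOrder K] [FloorRing K] {v : K} {n : ℕ}

theorem one_le_of_den [IsStrictOrderedRing K] (v : K) (n : ℕ) : 1 ≤ (of v).dens n := by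
  induction n with
  | zero => rw [zeroth_den_eq_one]
  | succ n ih => exact ih.trans of_den_mono

theorem of_den_pos [IsStrictOrderedRing K] (v : K) (n : ℕ) : 0 < (of v).dens n :=
  zero_lt_one.trans_le (one_le_of_den v n)

theorem exists_int_eq_of_num (v : K) (n : ℕ) : ∃ z : ℤ, (of v).nums n = z := by
  suffices h : ∀ n, (∃ z : ℤ, ((of v).contsAux n).a = z) ∧
      ∃ z : ℤ, ((of v).contsAux (n + 1)).a = z from (h (n + 1)).1
  intro n
  induction n with
  | zero => exact ⟨⟨1, by simp [zeroth_contAux_eq_one_zero]⟩, ⌊v⌋, by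
      rw [first_contAux_eq_h_one, of_h_eq_floor]⟩
  | succ n ih =>
    refine ⟨ih.2, ?_⟩
    obtain ⟨⟨z₀, hz₀⟩, z₁, hz₁⟩ := ih
    rcases hs : (of v).s.get? n with _ | gp
    · exact ⟨z₁, by simp [contsAux, hs, hz₁]⟩
    · obtain ⟨ha, b, hb⟩ := of_partNum_eq_one_and_exists_int_partDen_eq hs
      exact ⟨b * z₁ + z₀, by
        simp [contsAux, hs, nextConts, nextNum, ha, hb, hz₀, hz₁]⟩

theorem exists_stream_eq_some_of_not_terminates (h : ¬(of v).Terminates) (n : ℕ) :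
    ∃ p, IntFractPair.stream v n = some p := by
  have hsucc : IntFractPair.stream v (n + 1) ≠ none := fun hnone ↦
    h ⟨n, of_terminatedAt_n_iff_succ_nth_intFractPair_stream_eq_none.mpr hnone⟩
  obtain ⟨p, hp, -⟩ :=
    IntFractPair.succ_nth_stream_eq_some_iff.mp (Option.ne_none_iff_exists'.mp hsucc).choose_spec
  exact ⟨p, hp⟩

theorem dens_add_two_eq {b : K} (hb : (of v).partDens.get? (n + 1) = some b) :
    (of v).dens (n + 2) = b * (of v).dens (n + 1) + (of v).dens n := by
  obtain ⟨gp, hgp, rfl⟩ := exists_s_b_of_partDen hb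
  rw [dens_recurrence hgp rfl rfl, of_partNum_eq_one (partNum_eq_s_a hgp), one_mul]

theorem fr_inv_eq_partDen_add_fr {p p' : IntFractPair K} {b : K}
    (hp : IntFractPair.stream v n = some p) (hp' : IntFractPair.stream v (n + 1) = some p')
    (hb : (of v).partDens.get? n = some b) : p.fr⁻¹ = b + p'.fr := by
  obtain ⟨q, hq, -, rfl⟩ := IntFractPair.succ_nth_stream_eq_some_iff.mp hp'
  obtain rfl : p = q := Option.some.inj (hp.symm.trans hq)
  obtain ⟨gp, hgp, rfl⟩ := exists_s_b_of_partDen hb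
  rw [get?_of_eq_some_of_succ_get?_intFractPair_stream hp', Option.some.injEq] at hgp
  rw [← hgp]
  exact (Int.floor_add_fract _).symm

theorem not_terminates_of_irrational {v : ℝ} (hv : Irrational v) : ¬(of v).Terminates := by
  rw [terminates_iff_rat]
  rintro ⟨q, rfl⟩
  exact hv ⟨q, rfl⟩

end GenContFract

theorem nint_dens_mul_eq {v : ℝ} {n : ℕ} {p : IntFractPair ℝ}
    (hp : IntFractPair.stream v (n + 1) = some p) (hfr : p.fr ≠ 0) :
    nint ((of v).dens (n + 1) * v) = (p.fr⁻¹ * (of v).dens (n + 1) + (of v).dens n)⁻¹ := by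
  set q := (of v).dens (n + 1)
  set D := p.fr⁻¹ * q + (of v).dens n
  have hq : 1 ≤ q := one_le_of_den v _
  have hD : 2 < D := by
    have := one_le_of_den v n
    have : 1 < p.fr⁻¹ := one_lt_inv₀ (hfr.symm.lt_of_le (IntFractPair.nth_stream_fr_nonneg hp))
      |>.mpr (IntFractPair.nth_stream_fr_lt_one hp)
    nlinarith
  have herr : v - (of v).convs (n + 1) = (-1) ^ (n + 1) / (q * D) := by
    have := sub_convs_eq hp
    simp only [hfr, if_false] at this
    exact this
  obtain ⟨z, hz⟩ := exists_int_eq_of_num v (n + 1)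
  have habs : |q * v - z| = D⁻¹ := by
    have : q * v - z = q * (v - (of v).convs (n + 1)) := by
      rw [conv_eq_num_div_den, hz, mul_sub, mul_div_cancel₀ _ (by positivity)]
    rw [this, herr, ← mul_div_assoc, mul_div_mul_left _ _ (by positivity), abs_div, abs_pow,
      abs_neg, abs_one, one_pow, abs_of_pos (by positivity), one_div]
  have hround : round (q * v) = z := by
    rw [round_eq, Int.floor_eq_iff]
    have hD' : D⁻¹ < 2⁻¹ := inv_strictAnti₀ two_pos hD
    have := abs_lt.mp (habs.trans_lt hD')
    constructor <;> linarith
  rw [nint, hround, habs]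

section PartialQuotientsTwo

variable {v : ℝ} {N : ℕ} (hN : ∀ i ≥ N, (of v).partDens.get? i = some 2)
include hN

theorem tendsto_dens_div_dens_succ_of_partDens_eq_two :
    Tendsto (fun n ↦ (of v).dens n / (of v).dens (n + 1)) atTop (𝓝 (√2 - 1)) := by
  have hq := of_den_pos v
  refine tendsto_of_dist_succ_le_mul (N := N) (c := 4⁻¹) (by norm_num) (by norm_num)
    fun n hn ↦ ?_
  have hrec : (of v).dens (n + 1) / (of v).dens (n + 2) =
      (2 + (of v).dens n / (of v).dens (n + 1))⁻¹ := by
    have := hq n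
    have := hq (n + 1)
    rw [dens_add_two_eq (hN (n + 1) (Nat.le_succ_of_le hn))]
    field_simp
  have := dist_inv_two_add_le (div_pos (hq n) (hq (n + 1))).le sqrt_two_sub_one_mem_Ico.1
  rwa [← sqrt_two_sub_one_eq_inv, ← hrec] at this

theorem stream_fr_eq_sqrt_two_sub_one_of_partDens_eq_two (hv : ¬(of v).Terminates) :
    ∀ n ≥ N, ∀ p, IntFractPair.stream v n = some p → p.fr = √2 - 1 := by
  choose p hp using exists_stream_eq_some_of_not_terminates hv
  have hfr_mem n : (p n).fr ∈ Set.Ico (0 : ℝ) 1 :=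
    IntFractPair.nth_stream_fr_nonneg_lt_one (hp n)
  have hL := sqrt_two_sub_one_mem_Ico
  have hconst : ∀ n ≥ N, (p n).fr = √2 - 1 := by
    refine eq_of_dist_le_mul_dist_succ (u := fun n ↦ (p n).fr) (B := 1) (c := 4⁻¹)
      (by norm_num) (by norm_num) (fun n ↦ ?_) fun n hn ↦ ?_
    · obtain ⟨h₀, h₁⟩ := hfr_mem n
      rw [Real.dist_eq, abs_le]
      constructor <;> linarith [hL.1, hL.2]
    · have hrec : (p n).fr = (2 + (p (n + 1)).fr)⁻¹ := by
        rw [← fr_inv_eq_partDen_add_fr (hp n) (hp (n + 1)) (hN n hn), inv_inv]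
      have := dist_inv_two_add_le (hfr_mem (n + 1)).1 hL.1
      rwa [← sqrt_two_sub_one_eq_inv, ← hrec] at this
  intro n hn q hq
  rw [← hconst n hn, Option.some.inj (hq.symm.trans (hp n))]

theorem nint_dens_mul_div_eq_of_partDens_eq_two (hv : ¬(of v).Terminates) :
    ∀ n ≥ N, nint ((of v).dens (n + 2) * v) / nint ((of v).dens (n + 1) * v) = √2 - 1 := by
  have hq := of_den_pos v
  have hL : (√2 - 1)⁻¹ = 2 + (√2 - 1) := inv_eq_iff_eq_inv.mpr sqrt_two_sub_one_eq_inv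
  have hnint : ∀ m ≥ N, nint ((of v).dens (m + 1) * v) =
      ((2 + (√2 - 1)) * (of v).dens (m + 1) + (of v).dens m)⁻¹ := by
    intro m hm
    obtain ⟨p, hp⟩ := exists_stream_eq_some_of_not_terminates hv (m + 1)
    have hpL := stream_fr_eq_sqrt_two_sub_one_of_partDens_eq_two hN hv (m + 1)
      (Nat.le_succ_of_le hm) p hp
    have hpL₀ : p.fr ≠ 0 := by rw [hpL]; exact (sub_pos.mpr Real.one_lt_sqrt_two).ne'
    rw [nint_dens_mul_eq hp hpL₀, hpL, hL]
  intro n hn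
  rw [hnint (n + 1) (Nat.le_succ_of_le hn), hnint n hn,
    dens_add_two_eq (hN (n + 1) (Nat.le_succ_of_le hn))]
  have := sqrt_two_sub_one_mem_Ico.1
  have := hq n
  have := hq (n + 1)
  rw [inv_div_inv, div_eq_iff (by positivity)]
  linear_combination -(2 * (of v).dens (n + 1) + (of v).dens n) * Real.mul_self_sqrt zero_le_two

end PartialQuotientsTwo

theorem stmt12 (α : ℝ) (hα : Irrational α)
    (ha : ∃ N : ℕ, ∀ i ≥ N, (GenContFract.of α).partDens.get? i = some 2) :
    Tendsto (fun n : ℕ => qd α n / qd α (n + 1)) atTop (𝓝 (Real.sqrt 2 - 1)) ∧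
    Tendsto (fun n : ℕ => nint (qd α (n + 1) * α) / nint (qd α n * α)) atTop
      (𝓝 (Real.sqrt 2 - 1)) := by
  obtain ⟨N, hN⟩ := ha
  refine ⟨tendsto_dens_div_dens_succ_of_partDens_eq_two hN, tendsto_const_nhds.congr' ?_⟩
  filter_upwards [eventually_ge_atTop (N + 1)] with n hn
  obtain ⟨m, rfl⟩ : ∃ m, n = m + 1 := ⟨n - 1, by omega⟩
  exact (nint_dens_mul_div_eq_of_partDens_eq_two hN (not_terminates_of_irrational hα) m
    (Nat.le_of_succ_le_succ hn)).symm
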